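/- Let μ ∈ ℝ and v > 0, let X₁, X₂ be independent random variables each distributed N(μ, v), and define m(x) = E[|x − X₂|] for x ∈ ℝ. Then Var(m(X₁)) = v (1/3 + (2√3 − 4)/π). -/

import Mathlib

/-!
Standardising, `m (μ + √v z) = √v g z` with `g z = E|z - Z| = z (2Φ z - 1) + 2 φ z` for a standard
Gaussian `Z`, so the claim is `Var g(Z) = 1/3 + (2√3 - 4)/π`. Since `g' = 2Φ - 1`, `(2Φ - 1)' = 2φ`
and `φ' = -z φ`, Stein's identity `E[Z f(Z)] = E[f'(Z)]` applied to `2Φ - 1`, `(2Φ - 1) g` and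
`φ (2Φ - 1)` reduces `E g(Z)` and `E g(Z)²` to `E (2Φ(Z) - 1)² = 1/3` and the Gaussian integrals
`E φ(Z) = 1/(2√π)`, `E φ(Z)² = 1/(2√3 π)`.
-/

open MeasureTheory ProbabilityTheory Real Filter Set Topology
open scoped NNReal

namespace ProbabilityTheory

variable {μ : ℝ} {v : ℝ≥0}

lemma hasDerivAt_gaussianPDFReal (μ : ℝ) (v : ℝ≥0) (x : ℝ) :
    HasDerivAt (gaussianPDFReal μ v) (-((x - μ) / v) * gaussianPDFReal μ v x) x := by
  have h : HasDerivAt (fun y ↦ -(y - μ) ^ 2 / (2 * v)) (-((x - μ) / v)) x :=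
    (((hasDerivAt_id' x).sub_const μ).pow 2).neg.div_const (2 * (v : ℝ)) |>.congr_deriv
      (by ring)
  exact (h.exp.const_mul (√(2 * π * v))⁻¹).congr_deriv (by rw [gaussianPDFReal]; ring)

lemma integrable_gaussianReal_iff (hv : v ≠ 0) {f : ℝ → ℝ} :
    Integrable f (gaussianReal μ v) ↔ Integrable (fun x ↦ gaussianPDFReal μ v x * f x) := by
  rw [gaussianReal_of_var_ne_zero _ hv, integrable_withDensity_iff_integrable_smul'
    (measurable_gaussianPDF μ v) (ae_of_all _ fun _ ↦ gaussianPDF_lt_top)]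
  simp [toReal_gaussianPDF]

lemma integrable_id_gaussianReal : Integrable id (gaussianReal μ v) :=
  memLp_one_iff_integrable.1 (memLp_id_gaussianReal' 1 (by norm_num))

lemma integrable_gaussianReal_of_abs_le {f : ℝ → ℝ} (hf : AEStronglyMeasurable f (gaussianReal μ v))
    (C : ℝ) (hfC : ∀ x, |f x| ≤ C * (1 + |x|) ^ 2) : Integrable f (gaussianReal μ v) := by
  have h_one : MemLp (fun _ ↦ (1 : ℝ)) 2 (gaussianReal μ v) := memLp_const 1
  have h_abs : MemLp (fun x ↦ |x|) 2 (gaussianReal μ v) :=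
    (memLp_id_gaussianReal' 2 (by norm_num)).abs
  exact ((h_one.add h_abs).integrable_sq.const_mul C).mono' hf
    (ae_of_all _ fun x ↦ (norm_eq_abs (f x)).trans_le (hfC x))

theorem integral_sub_mul_gaussianReal (hv : v ≠ 0) {f f' : ℝ → ℝ}
    (hf : ∀ x, HasDerivAt f (f' x) x) (hf_int : Integrable f (gaussianReal μ v))
    (hxf_int : Integrable (fun x ↦ (x - μ) * f x) (gaussianReal μ v))
    (hf'_int : Integrable f' (gaussianReal μ v)) :
    ∫ x, (x - μ) * f x ∂gaussianReal μ v = v * ∫ x, f' x ∂gaussianReal μ v := by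
  rw [integrable_gaussianReal_iff hv] at hf_int hxf_int hf'_int
  have hderiv : ∀ x, HasDerivAt (fun x ↦ gaussianPDFReal μ v x * f x)
      (gaussianPDFReal μ v x * f' x - (v : ℝ)⁻¹ * (gaussianPDFReal μ v x * ((x - μ) * f x))) x := by
    intro x
    exact ((hasDerivAt_gaussianPDFReal μ v x).fun_mul (hf x)).congr_deriv (by ring)
  have h := integral_eq_zero_of_hasDerivAt_of_integrable hderiv
    (hf'_int.sub (hxf_int.const_mul _)) hf_int
  rw [integral_sub hf'_int (hxf_int.const_mul _), integral_const_mul, sub_eq_zero] at h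
  simp only [integral_gaussianReal_eq_integral_smul hv, smul_eq_mul, h]
  field_simp

lemma hasDerivAt_cdf_gaussianReal (hv : v ≠ 0) (x : ℝ) :
    HasDerivAt (cdf (gaussianReal μ v)) (gaussianPDFReal μ v x) x := by
  have hcdf : ∀ t, cdf (gaussianReal μ v) t =
      (∫ y in Iic 0, gaussianPDFReal μ v y) + ∫ y in (0)..t, gaussianPDFReal μ v y := by
    intro t
    rw [cdf_eq_real, measureReal_def, gaussianReal_apply_eq_integral _ hv,
      ENNReal.toReal_ofReal (setIntegral_nonneg measurableSet_Iic
        fun y _ ↦ gaussianPDFReal_nonneg μ v y),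
      ← intervalIntegral.integral_Iic_sub_Iic (integrable_gaussianPDFReal μ v).integrableOn
        (integrable_gaussianPDFReal μ v).integrableOn]
    ring
  rw [funext hcdf]
  exact (intervalIntegral.integral_hasDerivAt_right
    (integrable_gaussianPDFReal μ v).intervalIntegrable
    (stronglyMeasurable_gaussianPDFReal μ v).stronglyMeasurableAtFilter
    ((hasDerivAt_gaussianPDFReal μ v x).continuousAt)).const_add _

lemma tendsto_gaussianPDFReal_atBot (hv : v ≠ 0) :
    Tendsto (gaussianPDFReal μ v) atBot (𝓝 0) := by
  have hx : Integrable (fun x ↦ -((x - μ) / v) * gaussianPDFReal μ v x) := by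
    have := ((integrable_gaussianReal_iff (μ := μ) hv).1
      (integrable_id_gaussianReal.sub (integrable_const μ))).const_mul (-(v : ℝ)⁻¹)
    refine this.congr (ae_of_all _ fun x ↦ ?_)
    simp only [Pi.sub_apply, id]
    ring
  exact tendsto_zero_of_hasDerivAt_of_integrableOn_Iic (a := 0)
    (fun x _ ↦ hasDerivAt_gaussianPDFReal μ v x) hx.integrableOn
    (integrable_gaussianPDFReal μ v).integrableOn

@[fun_prop]
lemma continuous_gaussianPDFReal (μ : ℝ) (v : ℝ≥0) : Continuous (gaussianPDFReal μ v) :=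
  continuous_iff_continuousAt.2 fun x ↦ (hasDerivAt_gaussianPDFReal μ v x).continuousAt

lemma abs_two_mul_cdf_sub_one_le (ν : Measure ℝ) (x : ℝ) : |2 * cdf ν x - 1| ≤ 1 := by
  rw [abs_le]
  constructor <;> linarith [cdf_nonneg ν x, cdf_le_one ν x]

end ProbabilityTheory

section StandardGaussian

local notation "γ" => gaussianReal 0 1
local notation "φ" => gaussianPDFReal 0 1
local notation "Φ" => cdf (gaussianReal 0 1)

@[fun_prop]
lemma continuous_cdf_gaussianReal_zero_one : Continuous Φ :=
  continuous_iff_continuousAt.2 fun x ↦ (hasDerivAt_cdf_gaussianReal one_ne_zero x).continuousAt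

lemma gaussianPDFReal_zero_one_le_one (x : ℝ) : φ x ≤ 1 := by
  have h2π : 1 ≤ √(2 * π) := one_le_sqrt.2 (by linarith [pi_gt_three])
  calc φ x = (√(2 * π))⁻¹ * exp (-x ^ 2 / 2) := by simp [gaussianPDFReal]
    _ ≤ 1 * 1 := by
      gcongr
      · exact inv_le_one_of_one_le₀ h2π
      · exact exp_le_one_iff.2 (by nlinarith)
    _ = 1 := one_mul 1

lemma integral_gaussianPDFReal_pow_gaussianReal (n : ℕ) :
    ∫ x, φ x ^ n ∂γ = (√(2 * π))⁻¹ ^ n / √(n + 1) := by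
  have h : ∀ x, φ x • φ x ^ n = (√(2 * π))⁻¹ ^ (n + 1) * exp (-((n + 1) / 2) * x ^ 2) := by
    intro x
    rw [smul_eq_mul, ← pow_succ']
    simp only [gaussianPDFReal, NNReal.coe_one, mul_one, sub_zero, mul_pow, ← exp_nat_mul]
    congr 2
    push_cast
    ring
  simp only [integral_gaussianReal_eq_integral_smul one_ne_zero, h, integral_const_mul,
    integral_gaussian]
  rw [show π / ((n + 1) / 2) = 2 * π / (n + 1) by field_simp, sqrt_div' _ (by positivity),
    pow_succ]
  field_simp

lemma hasDerivAt_two_mul_cdf_sub_one (x : ℝ) : HasDerivAt (fun x ↦ 2 * Φ x - 1) (2 * φ x) x :=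
  ((hasDerivAt_cdf_gaussianReal one_ne_zero x).const_mul 2).sub_const 1

noncomputable def gaussianMeanAbsDist (x : ℝ) : ℝ := ∫ z, |x - z| ∂γ

lemma setIntegral_Iic_sub_mul_gaussianPDFReal (t : ℝ) :
    ∫ z in Iic t, (t - z) * φ z = t * Φ t + φ t := by
  have hint : Integrable (fun z ↦ (t - z) * φ z) := by
    refine ((integrable_gaussianReal_iff (μ := 0) one_ne_zero).1
      ((integrable_const t).sub integrable_id_gaussianReal)).congr (ae_of_all _ fun z ↦ ?_)
    simp only [Pi.sub_apply, id]
    ring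
  have hderiv : ∀ z ∈ Iic t, HasDerivAt (fun z ↦ t * Φ z + φ z) ((t - z) * φ z) z :=
    fun z _ ↦ (((hasDerivAt_cdf_gaussianReal one_ne_zero z).const_mul t).add
      (hasDerivAt_gaussianPDFReal 0 1 z)).congr_deriv (by simp only [NNReal.coe_one]; ring)
  have hlim : Tendsto (fun z ↦ t * Φ z + φ z) atBot (𝓝 0) := by
    simpa using ((tendsto_cdf_atBot γ).const_mul t).add (tendsto_gaussianPDFReal_atBot one_ne_zero)
  rw [integral_Iic_of_hasDerivAt_of_tendsto' hderiv hint.integrableOn hlim, sub_zero]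

lemma gaussianMeanAbsDist_eq (x : ℝ) : gaussianMeanAbsDist x = x * (2 * Φ x - 1) + 2 * φ x := by
  have habs : ∀ z, |x - z| = 2 * max (x - z) 0 - (x - z) := fun z ↦ by
    rcases le_total z x with h | h
    · rw [abs_of_nonneg (sub_nonneg.2 h), max_eq_left (sub_nonneg.2 h)]; ring
    · rw [abs_of_nonpos (sub_nonpos.2 h), max_eq_right (sub_nonpos.2 h)]; ring
  have hid : Integrable (fun z ↦ z) γ := integrable_id_gaussianReal
  have hint : Integrable (fun z ↦ x - z) γ := (integrable_const x).sub hid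
  have hmean : ∫ z, (x - z) ∂γ = x := by
    rw [integral_sub (integrable_const x) hid, integral_const, integral_id_gaussianReal]
    simp
  have hpos : ∫ z, max (x - z) 0 ∂γ = x * Φ x + φ x := by
    rw [integral_gaussianReal_eq_integral_smul one_ne_zero,
      ← setIntegral_Iic_sub_mul_gaussianPDFReal,
      ← setIntegral_eq_integral_of_forall_compl_eq_zero (s := Iic x)]
    · refine setIntegral_congr_fun measurableSet_Iic fun z hz ↦ ?_
      simp only [smul_eq_mul, max_eq_left (sub_nonneg.2 (mem_Iic.1 hz))]
      ring
    · intro z hz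
      rw [mem_Iic, not_le] at hz
      simp [hz.le]
  rw [gaussianMeanAbsDist, funext habs, integral_sub (hint.pos_part.const_mul 2) hint,
    integral_const_mul, hpos, hmean]
  ring

lemma hasDerivAt_gaussianMeanAbsDist (x : ℝ) :
    HasDerivAt gaussianMeanAbsDist (2 * Φ x - 1) x := by
  rw [funext gaussianMeanAbsDist_eq]
  exact (((hasDerivAt_id' x).mul (hasDerivAt_two_mul_cdf_sub_one x)).add
    ((hasDerivAt_gaussianPDFReal 0 1 x).const_mul 2)).congr_deriv (by simp; ring)

@[fun_prop]
lemma continuous_gaussianMeanAbsDist : Continuous gaussianMeanAbsDist :=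
  continuous_iff_continuousAt.2 fun x ↦ (hasDerivAt_gaussianMeanAbsDist x).continuousAt

lemma abs_gaussianMeanAbsDist_le (x : ℝ) : |gaussianMeanAbsDist x| ≤ 2 * (1 + |x|) := by
  have hA := abs_two_mul_cdf_sub_one_le γ x
  have hφ := gaussianPDFReal_zero_one_le_one x
  have hφ₀ := gaussianPDFReal_nonneg 0 1 x
  rw [gaussianMeanAbsDist_eq]
  calc _ ≤ |x| * |2 * Φ x - 1| + 2 * φ x := by
        grw [abs_add_le, abs_mul, abs_mul, abs_two, abs_of_nonneg hφ₀]
    _ ≤ |x| * 1 + 2 * 1 := by gcongr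
    _ ≤ 2 * (1 + |x|) := by linarith [abs_nonneg x]

lemma integral_two_mul_cdf_sub_one_sq : ∫ x, (2 * Φ x - 1) ^ 2 ∂γ = 1 / 3 := by
  have hderiv : ∀ x, HasDerivAt (fun x ↦ (2 * Φ x - 1) ^ 3 / 6) (φ x • (2 * Φ x - 1) ^ 2) x :=
    fun x ↦ ((hasDerivAt_two_mul_cdf_sub_one x).pow 3).div_const 6 |>.congr_deriv (by ring)
  have hint : Integrable (fun x ↦ φ x • (2 * Φ x - 1) ^ 2) := by
    refine (integrable_gaussianReal_iff (μ := 0) one_ne_zero).1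
      (integrable_gaussianReal_of_abs_le (by fun_prop) 1 fun x ↦ ?_)
    have hA := abs_two_mul_cdf_sub_one_le γ x
    rw [abs_pow]
    nlinarith [abs_nonneg x, abs_nonneg (2 * Φ x - 1)]
  have hbot : Tendsto (fun x ↦ (2 * Φ x - 1) ^ 3 / 6) atBot (𝓝 (-1 / 6)) := by
    convert ((((tendsto_cdf_atBot γ).const_mul 2).sub_const 1).pow 3).div_const 6 using 2
    norm_num
  have htop : Tendsto (fun x ↦ (2 * Φ x - 1) ^ 3 / 6) atTop (𝓝 (1 / 6)) := by
    convert ((((tendsto_cdf_atTop γ).const_mul 2).sub_const 1).pow 3).div_const 6 using 2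
    norm_num
  rw [integral_gaussianReal_eq_integral_smul one_ne_zero,
    integral_of_hasDerivAt_of_tendsto hderiv hint hbot htop]
  norm_num

lemma integral_mul_gaussianReal_zero_one {f f' : ℝ → ℝ} (hf : ∀ x, HasDerivAt f (f' x) x)
    (hf_int : Integrable f γ) (hxf_int : Integrable (fun x ↦ x * f x) γ)
    (hf'_int : Integrable f' γ) : ∫ x, x * f x ∂γ = ∫ x, f' x ∂γ := by
  simpa using integral_sub_mul_gaussianReal one_ne_zero hf hf_int (by simpa using hxf_int) hf'_int

lemma integral_gaussianMeanAbsDist : ∫ x, gaussianMeanAbsDist x ∂γ = 4 * ∫ x, φ x ∂γ := by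
  have hA := abs_two_mul_cdf_sub_one_le γ
  have hφ := gaussianPDFReal_zero_one_le_one
  have hφ₀ := gaussianPDFReal_nonneg 0 1
  have iA : Integrable (fun x ↦ 2 * Φ x - 1) γ :=
    integrable_gaussianReal_of_abs_le (by fun_prop) 1 fun x ↦ by nlinarith [hA x, abs_nonneg x]
  have ixA : Integrable (fun x ↦ x * (2 * Φ x - 1)) γ :=
    integrable_gaussianReal_of_abs_le (by fun_prop) 1 fun x ↦ by
      rw [abs_mul]; nlinarith [hA x, abs_nonneg x, abs_nonneg (2 * Φ x - 1)]
  have iφ : Integrable (fun x ↦ 2 * φ x) γ :=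
    integrable_gaussianReal_of_abs_le (by fun_prop) 2 fun x ↦ by
      rw [abs_of_nonneg (by linarith [hφ₀ x])]; nlinarith [hφ x, abs_nonneg x]
  have hstein := integral_mul_gaussianReal_zero_one
    hasDerivAt_two_mul_cdf_sub_one iA ixA iφ
  simp_rw [gaussianMeanAbsDist_eq]
  rw [integral_add ixA iφ, hstein, integral_const_mul]
  ring

lemma integral_gaussianPDFReal_mul_gaussianMeanAbsDist :
    ∫ x, φ x * gaussianMeanAbsDist x ∂γ = 3 * ∫ x, φ x ^ 2 ∂γ := by
  have hA := abs_two_mul_cdf_sub_one_le γ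
  have hφ := gaussianPDFReal_zero_one_le_one
  have hφ₀ := gaussianPDFReal_nonneg 0 1
  have iφA : Integrable (fun x ↦ φ x * (2 * Φ x - 1)) γ :=
    integrable_gaussianReal_of_abs_le (by fun_prop) 1 fun x ↦ by
      rw [abs_mul, abs_of_nonneg (hφ₀ x)]
      nlinarith [hA x, hφ x, hφ₀ x, abs_nonneg x, abs_nonneg (2 * Φ x - 1)]
  have ixφA : Integrable (fun x ↦ x * (φ x * (2 * Φ x - 1))) γ :=
    integrable_gaussianReal_of_abs_le (by fun_prop) 1 fun x ↦ by
      rw [abs_mul, abs_mul, abs_of_nonneg (hφ₀ x)]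
      have : φ x * |2 * Φ x - 1| ≤ 1 := by nlinarith [hA x, hφ x, hφ₀ x, abs_nonneg (2 * Φ x - 1)]
      nlinarith [abs_nonneg x, hφ₀ x, abs_nonneg (2 * Φ x - 1)]
  have iφ2 : Integrable (fun x ↦ 2 * φ x ^ 2) γ :=
    integrable_gaussianReal_of_abs_le (by fun_prop) 2 fun x ↦ by
      rw [abs_of_nonneg (by positivity)]
      nlinarith [hφ x, hφ₀ x, abs_nonneg x]
  have hderiv : ∀ x, HasDerivAt (fun x ↦ φ x * (2 * Φ x - 1))
      (2 * φ x ^ 2 - x * (φ x * (2 * Φ x - 1))) x := fun x ↦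
    ((hasDerivAt_gaussianPDFReal 0 1 x).mul (hasDerivAt_two_mul_cdf_sub_one x)).congr_deriv
      (by simp; ring)
  have hstein := integral_mul_gaussianReal_zero_one hderiv iφA ixφA (iφ2.sub ixφA)
  rw [integral_sub iφ2 ixφA, integral_const_mul] at hstein
  have hsplit : ∀ x, φ x * gaussianMeanAbsDist x = x * (φ x * (2 * Φ x - 1)) + 2 * φ x ^ 2 :=
    fun x ↦ by rw [gaussianMeanAbsDist_eq]; ring
  simp_rw [hsplit]
  rw [integral_add ixφA iφ2, integral_const_mul]
  linarith

lemma integral_gaussianMeanAbsDist_sq :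
    ∫ x, gaussianMeanAbsDist x ^ 2 ∂γ = 1 / 3 + 12 * ∫ x, φ x ^ 2 ∂γ := by
  have hA := abs_two_mul_cdf_sub_one_le γ
  have hφ := gaussianPDFReal_zero_one_le_one
  have hφ₀ := gaussianPDFReal_nonneg 0 1
  have hg := abs_gaussianMeanAbsDist_le
  have iAg : Integrable (fun x ↦ (2 * Φ x - 1) * gaussianMeanAbsDist x) γ :=
    integrable_gaussianReal_of_abs_le (by fun_prop) 2 fun x ↦ by
      rw [abs_mul]
      nlinarith [hA x, hg x, abs_nonneg x, abs_nonneg (2 * Φ x - 1),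
        abs_nonneg (gaussianMeanAbsDist x)]
  have ixAg : Integrable (fun x ↦ x * ((2 * Φ x - 1) * gaussianMeanAbsDist x)) γ :=
    integrable_gaussianReal_of_abs_le (by fun_prop) 2 fun x ↦ by
      rw [abs_mul, abs_mul]
      have : |2 * Φ x - 1| * |gaussianMeanAbsDist x| ≤ 2 * (1 + |x|) := by
        nlinarith [hA x, hg x, abs_nonneg (2 * Φ x - 1), abs_nonneg (gaussianMeanAbsDist x)]
      nlinarith [abs_nonneg x]
  have iφg : Integrable (fun x ↦ 2 * (φ x * gaussianMeanAbsDist x)) γ :=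
    integrable_gaussianReal_of_abs_le (by fun_prop) 4 fun x ↦ by
      rw [abs_mul, abs_mul, abs_two, abs_of_nonneg (hφ₀ x)]
      nlinarith [hφ x, hg x, hφ₀ x, abs_nonneg x, abs_nonneg (gaussianMeanAbsDist x)]
  have iA2 : Integrable (fun x ↦ (2 * Φ x - 1) ^ 2) γ :=
    integrable_gaussianReal_of_abs_le (by fun_prop) 1 fun x ↦ by
      rw [abs_pow]
      nlinarith [hA x, abs_nonneg x, abs_nonneg (2 * Φ x - 1)]
  have hderiv : ∀ x, HasDerivAt (fun x ↦ (2 * Φ x - 1) * gaussianMeanAbsDist x)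
      (2 * (φ x * gaussianMeanAbsDist x) + (2 * Φ x - 1) ^ 2) x := fun x ↦
    ((hasDerivAt_two_mul_cdf_sub_one x).mul (hasDerivAt_gaussianMeanAbsDist x)).congr_deriv
      (by ring)
  have hstein := integral_mul_gaussianReal_zero_one hderiv iAg ixAg (iφg.add iA2)
  rw [integral_add iφg iA2, integral_two_mul_cdf_sub_one_sq] at hstein
  have hsplit : ∀ x, gaussianMeanAbsDist x ^ 2 =
      x * ((2 * Φ x - 1) * gaussianMeanAbsDist x) + 2 * (φ x * gaussianMeanAbsDist x) :=
    fun x ↦ by nth_rw 1 [sq, gaussianMeanAbsDist_eq]; ring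
  simp_rw [hsplit]
  rw [integral_add ixAg iφg, hstein, integral_const_mul,
    integral_gaussianPDFReal_mul_gaussianMeanAbsDist]
  ring

lemma variance_gaussianMeanAbsDist :
    Var[gaussianMeanAbsDist; γ] = 1 / 3 + (2 * √3 - 4) / π := by
  have hmem : MemLp gaussianMeanAbsDist 2 γ := by
    refine (memLp_two_iff_integrable_sq (by fun_prop)).2
      (integrable_gaussianReal_of_abs_le (by fun_prop) 4 fun x ↦ ?_)
    have hg := abs_gaussianMeanAbsDist_le x
    rw [abs_pow]
    nlinarith [abs_nonneg (gaussianMeanAbsDist x)]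
  have hφ : ∫ x, φ x ∂γ = (√(2 * π))⁻¹ / √2 := by
    simpa [one_add_one_eq_two] using integral_gaussianPDFReal_pow_gaussianReal 1
  have hφ2 : ∫ x, φ x ^ 2 ∂γ = (√(2 * π))⁻¹ ^ 2 / √3 := by
    simpa [show (2 : ℝ) + 1 = 3 by norm_num] using integral_gaussianPDFReal_pow_gaussianReal 2
  rw [variance_eq_sub hmem]
  simp only [Pi.pow_apply]
  rw [integral_gaussianMeanAbsDist_sq, integral_gaussianMeanAbsDist, hφ, hφ2]
  have h2π : √(2 * π) ^ 2 = 2 * π := sq_sqrt (by positivity)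
  have h2 : √2 ^ 2 = 2 := sq_sqrt (by norm_num)
  have h3 : √3 ^ 2 = 3 := sq_sqrt (by norm_num)
  field_simp
  rw [h2π, h2]
  linear_combination (-24 * π) * h3

lemma gaussianReal_eq_map_gaussianReal_zero_one (μ : ℝ) (v : ℝ≥0) :
    gaussianReal μ v = Measure.map (fun z ↦ μ + √v * z) γ := by
  have hcomp : (fun z ↦ μ + √v * z) = (μ + ·) ∘ (√v * ·) := rfl
  rw [hcomp, ← Measure.map_map (by fun_prop) (by fun_prop), gaussianReal_map_const_mul,
    gaussianReal_map_const_add]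
  congr 1
  · ring
  · ext
    simp [sq_sqrt v.coe_nonneg]

lemma integral_abs_sub_gaussianReal (μ : ℝ) (v : ℝ≥0) (z : ℝ) :
    ∫ y, |μ + √v * z - y| ∂gaussianReal μ v = √v * gaussianMeanAbsDist z := by
  have hscale : ∀ w, |μ + √v * z - (μ + √v * w)| = √v * |z - w| := fun w ↦ by
    rw [← abs_of_nonneg (sqrt_nonneg v), ← abs_mul, abs_of_nonneg (sqrt_nonneg v)]
    ring_nf
  rw [gaussianReal_eq_map_gaussianReal_zero_one μ v, integral_map (by fun_prop) (by fun_prop)]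
  simp_rw [hscale]
  rw [integral_const_mul, gaussianMeanAbsDist]

lemma variance_integral_abs_sub_gaussianReal {Ω : Type*} [MeasurableSpace Ω] {P : Measure Ω}
    {μ : ℝ} {v : ℝ≥0} {X : Ω → ℝ} (hX : MeasurePreserving X P (gaussianReal μ v)) :
    Var[fun ω ↦ ∫ y, |X ω - y| ∂gaussianReal μ v; P] = v * Var[gaussianMeanAbsDist; γ] := by
  have hmeas : Measurable fun x ↦ ∫ y, |x - y| ∂gaussianReal μ v :=
    (StronglyMeasurable.integral_prod_right' (f := fun p : ℝ × ℝ ↦ |p.1 - p.2|)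
      (by fun_prop)).measurable
  set m := fun x ↦ ∫ y, |x - y| ∂gaussianReal μ v
  have hm : m ∘ (fun z ↦ μ + √v * z) = fun z ↦ √v * gaussianMeanAbsDist z :=
    funext (integral_abs_sub_gaussianReal μ v)
  rw [hX.variance_fun_comp hmeas.aemeasurable, gaussianReal_eq_map_gaussianReal_zero_one μ v,
    variance_map hmeas.aemeasurable (by fun_prop), hm, variance_const_mul, sq_sqrt v.coe_nonneg]

end StandardGaussian

theorem gini_projection_variance_gaussian_general
    {Ω : Type*} [MeasurableSpace Ω] (P : Measure Ω)
    (μ : ℝ) (v : ℝ≥0)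
    (X₁ X₂ : Ω → ℝ) (hX₁ : Measurable X₁) (hX₂ : Measurable X₂)
    (hlaw₁ : Measure.map X₁ P = gaussianReal μ v)
    (hlaw₂ : Measure.map X₂ P = gaussianReal μ v)
    (m : ℝ → ℝ) (hm : ∀ x, m x = ∫ ω, |x - X₂ ω| ∂P) :
    variance (fun ω => m (X₁ ω)) P =
      (v : ℝ) * (1 / 3 + (2 * Real.sqrt 3 - 4) / Real.pi) := by
  have hm' : ∀ x, m x = ∫ y, |x - y| ∂gaussianReal μ v := fun x ↦ by
    rw [hm, ← hlaw₂, integral_map hX₂.aemeasurable (by fun_prop)]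
  simp_rw [hm', variance_integral_abs_sub_gaussianReal ⟨hX₁, hlaw₁⟩, variance_gaussianMeanAbsDist]

/-- projection variance of the Gini-mean-difference kernel under a
Gaussian. If `X₁, X₂` are independent `N(μ, v)` with `v > 0` and `m(x) = E|x − X₂|`, then
`Var(m(X₁)) = v (1/3 + (2√3 − 4)/π)`. -/
theorem gini_projection_variance_gaussian
    {Ω : Type*} [MeasurableSpace Ω] (P : Measure Ω) [IsProbabilityMeasure P]
    (μ : ℝ) (v : ℝ≥0) (hv : 0 < v)
    (X₁ X₂ : Ω → ℝ) (hX₁ : Measurable X₁) (hX₂ : Measurable X₂)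
    (hindep : IndepFun X₁ X₂ P)
    (hlaw₁ : Measure.map X₁ P = gaussianReal μ v)
    (hlaw₂ : Measure.map X₂ P = gaussianReal μ v)
    (m : ℝ → ℝ) (hm : ∀ x, m x = ∫ ω, |x - X₂ ω| ∂P) :
    variance (fun ω => m (X₁ ω)) P =
      (v : ℝ) * (1 / 3 + (2 * Real.sqrt 3 - 4) / Real.pi) :=
  gini_projection_variance_gaussian_general P μ v X₁ X₂ hX₁ hX₂ hlaw₁ hlaw₂ m hm
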